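/- arXiv:2501.13747 — 2 statements merged into one kernel-verified Lean document; each statement's English description precedes it below -/
import Mathlib

section
/- Let (⇀, ↼) be a matched pair of actions on a Hopf algebra H over a field k with antipode S, and let r be the associated Yang–Baxter operator. If r∘r = id_{H⊗H}, then S(x ↼ y) = S(y) ⇀ S(x) for all x, y ∈ H. -/
/-!
Write `E(x ⊗ y) = ε(x) y`. The counit axiom for `⇀` gives `E ∘ r = ↼`, so if `r ∘ r = id` then
`↼ ∘ r = E`, and the left side composed with `r` is `S ∘ E`. By the symmetry axiom of a matched
pair, `τ ∘ r = (↼ ⊗ ⇀) ∘ Δ`, so the right side composed with `r` is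
`x ⊗ y ↦ S(x₁ ↼ y₁) ⇀ S(x₂ ⇀ y₂)`. Both actions are coalgebra maps `H ⊗ H → H`, so `S ∘ ⇀`
and `S ∘ ↼` are left inverses of them for the convolution product. The axiom
`x ⇀ ab = (x₁ ⇀ a₁)((x₂ ↼ a₂) ⇀ b)` exhibits `x ⊗ y ↦ (x ↼ y₁) ⇀ S(y₂)` as a right inverse
of `⇀`, hence `S(x ⇀ y) = (x ↼ y₁) ⇀ S(y₂)`, and the module axiom then collapses
`S(x₁ ↼ y₁) ⇀ ((x₂ ↼ y₂) ⇀ S(y₃))` to `ε(x) S(y)`. Since `r` is invertible, the two sides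
agree.
-/

open TensorProduct

noncomputable section

variable (k H : Type) [Field k] [Ring H] [HopfAlgebra k H]

/-- The map `x ⊗ y ↦ Σ (x₁ ⊗ y₁) ⊗ (x₂ ⊗ y₂)` (Sweedler notation). -/
def sweedler2 : H ⊗[k] H →ₗ[k] (H ⊗[k] H) ⊗[k] (H ⊗[k] H) :=
  (TensorProduct.tensorTensorTensorComm k H H H H).toLinearMap ∘ₗ
    TensorProduct.map Coalgebra.comul Coalgebra.comul

variable {k H}

/-- `f : H ⊗ H →ₗ H`, written `f (x ⊗ₜ y) = x ⇀ y`, is a left `H`-module coalgebra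
action of `H` on itself. -/
structure IsLeftModuleCoalgebraAction (f : H ⊗[k] H →ₗ[k] H) : Prop where
  /-- `x ⇀ (y ⇀ w) = (xy) ⇀ w` -/
  mul_act : f ∘ₗ TensorProduct.map LinearMap.id f ∘ₗ (TensorProduct.assoc k H H H).toLinearMap
    = f ∘ₗ TensorProduct.map (LinearMap.mul' k H) LinearMap.id
  /-- `1 ⇀ y = y` -/
  one_act : ∀ y : H, f ((1 : H) ⊗ₜ[k] y) = y
  /-- `Δ(x ⇀ y) = (x₁ ⇀ y₁) ⊗ (x₂ ⇀ y₂)` -/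
  comul_comp : Coalgebra.comul ∘ₗ f = TensorProduct.map f f ∘ₗ sweedler2 k H
  /-- `ε(x ⇀ y) = ε(x)ε(y)` -/
  counit_comp : Coalgebra.counit ∘ₗ f
    = (TensorProduct.lid k k).toLinearMap ∘ₗ
        TensorProduct.map Coalgebra.counit Coalgebra.counit

/-- `g : H ⊗ H →ₗ H`, written `g (x ⊗ₜ y) = x ↼ y`, is a right `H`-module coalgebra
action of `H` on itself. -/
structure IsRightModuleCoalgebraAction (g : H ⊗[k] H →ₗ[k] H) : Prop where
  /-- `(x ↼ y) ↼ w = x ↼ (yw)` -/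
  act_mul : g ∘ₗ TensorProduct.map g LinearMap.id
    = g ∘ₗ TensorProduct.map LinearMap.id (LinearMap.mul' k H) ∘ₗ
        (TensorProduct.assoc k H H H).toLinearMap
  /-- `x ↼ 1 = x` -/
  act_one : ∀ x : H, g (x ⊗ₜ[k] (1 : H)) = x
  /-- `Δ(x ↼ y) = (x₁ ↼ y₁) ⊗ (x₂ ↼ y₂)` -/
  comul_comp : Coalgebra.comul ∘ₗ g = TensorProduct.map g g ∘ₗ sweedler2 k H
  /-- `ε(x ↼ y) = ε(x)ε(y)` -/
  counit_comp : Coalgebra.counit ∘ₗ g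
    = (TensorProduct.lid k k).toLinearMap ∘ₗ
        TensorProduct.map Coalgebra.counit Coalgebra.counit

/-- `(f, g)` (written `f (x ⊗ₜ y) = x ⇀ y` and `g (x ⊗ₜ y) = x ↼ y`) is a matched pair
of actions on the Hopf algebra `H`. -/
structure IsMatchedPairOfActions (f g : H ⊗[k] H →ₗ[k] H) : Prop where
  left : IsLeftModuleCoalgebraAction f
  right : IsRightModuleCoalgebraAction g
  /-- `x ⇀ (ab) = (x₁ ⇀ a₁)((x₂ ↼ a₂) ⇀ b)` -/
  mp1 : f ∘ₗ TensorProduct.map LinearMap.id (LinearMap.mul' k H) ∘ₗ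
      (TensorProduct.assoc k H H H).toLinearMap
    = LinearMap.mul' k H ∘ₗ
        TensorProduct.map f (f ∘ₗ TensorProduct.map g LinearMap.id) ∘ₗ
        (TensorProduct.assoc k (H ⊗[k] H) (H ⊗[k] H) H).toLinearMap ∘ₗ
        TensorProduct.map (sweedler2 k H) LinearMap.id
  /-- `x ⇀ 1 = ε(x)1` -/
  mp2 : ∀ x : H, f (x ⊗ₜ[k] (1 : H)) = Coalgebra.counit (R := k) x • (1 : H)
  /-- `(xy) ↼ a = (x ↼ (y₁ ⇀ a₁))(y₂ ↼ a₂)` -/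
  mp3 : g ∘ₗ TensorProduct.map (LinearMap.mul' k H) LinearMap.id
    = LinearMap.mul' k H ∘ₗ
        TensorProduct.map (g ∘ₗ TensorProduct.map LinearMap.id f) g ∘ₗ
        (TensorProduct.assoc k H (H ⊗[k] H) (H ⊗[k] H)).symm.toLinearMap ∘ₗ
        TensorProduct.map LinearMap.id (sweedler2 k H) ∘ₗ
        (TensorProduct.assoc k H H H).toLinearMap
  /-- `1 ↼ a = ε(a)1` -/
  mp4 : ∀ a : H, g ((1 : H) ⊗ₜ[k] a) = Coalgebra.counit (R := k) a • (1 : H)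
  /-- `(x₁ ⇀ a₁) ⊗ (x₂ ↼ a₂) = (x₂ ⇀ a₂) ⊗ (x₁ ↼ a₁)` -/
  mp5 : TensorProduct.map f g ∘ₗ sweedler2 k H
    = TensorProduct.map f g ∘ₗ
        (TensorProduct.comm k (H ⊗[k] H) (H ⊗[k] H)).toLinearMap ∘ₗ sweedler2 k H
  /-- `xy = (x₁ ⇀ y₁)(x₂ ↼ y₂)` -/
  factor : LinearMap.mul' k H
    = LinearMap.mul' k H ∘ₗ TensorProduct.map f g ∘ₗ sweedler2 k H

variable (k H)

/-- The Yang–Baxter operator `r (x ⊗ₜ y) = (x₁ ⇀ y₁) ⊗ (x₂ ↼ y₂)` associated to a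
matched pair of actions. -/
def ybOp (f g : H ⊗[k] H →ₗ[k] H) : H ⊗[k] H →ₗ[k] H ⊗[k] H :=
  TensorProduct.map f g ∘ₗ sweedler2 k H

end
noncomputable section
variable {k H : Type} [Field k] [Ring H] [HopfAlgebra k H]

open Coalgebra HopfAlgebra WithConv LinearMap

section ConvAct

variable {R C A M : Type*} [CommSemiring R] [AddCommMonoid C] [Module R C] [Coalgebra R C]
  [Semiring A] [Algebra R A] [AddCommMonoid M] [Module R M]

/-- `Hom(C, M)` as a module over the convolution algebra `Hom(C, A)`, given an action
`act : A ⊗ M → M`. -/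
def convAct (act : A ⊗[R] M →ₗ[R] M) (φ : C →ₗ[R] A) (ψ : C →ₗ[R] M) : C →ₗ[R] M :=
  act ∘ₗ map φ ψ ∘ₗ comul

theorem convAct_convAct {act : A ⊗[R] M →ₗ[R] M}
    (hact : act ∘ₗ map id act ∘ₗ (TensorProduct.assoc R A A M).toLinearMap =
      act ∘ₗ map (mul' R A) id)
    (φ χ : C →ₗ[R] A) (ψ : C →ₗ[R] M) :
    convAct act φ (convAct act χ ψ) = convAct act (toConv φ * toConv χ).ofConv ψ := by
  calc convAct act φ (convAct act χ ψ)
      = (act ∘ₗ map id act ∘ₗ (TensorProduct.assoc R A A M).toLinearMap) ∘ₗ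
          (TensorProduct.assoc R A A M).symm.toLinearMap ∘ₗ map φ (map χ ψ) ∘ₗ
            comul.lTensor C ∘ₗ comul := by
        simp only [convAct, coassoc_simps]
    _ = convAct act (toConv φ * toConv χ).ofConv ψ := by
        rw [hact]
        simp only [convAct, LinearMap.convMul_def, ofConv_toConv, coassoc_simps]

theorem convAct_one {act : A ⊗[R] M →ₗ[R] M} (hact : ∀ m, act (1 ⊗ₜ m) = m) (ψ : C →ₗ[R] M) :
    convAct act (1 : WithConv (C →ₗ[R] A)).ofConv ψ = ψ := by
  ext c
  calc convAct act (1 : WithConv (C →ₗ[R] A)).ofConv ψ c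
      = ∑ i ∈ (ℛ R c).index, counit (R := R) ((ℛ R c).left i) • ψ ((ℛ R c).right i) := by
        simp [convAct, ← (ℛ R c).eq, Algebra.algebraMap_eq_smul_one, TensorProduct.smul_tmul,
          hact]
    _ = ψ c := by simp only [← map_smul, ← map_sum, sum_counit_smul]

end ConvAct

section CounitSMul

variable {R C D M N : Type*} [CommSemiring R] [AddCommMonoid C] [Module R C]
  [AddCommMonoid D] [Module R D] [AddCommMonoid M] [Module R M] [AddCommMonoid N] [Module R N]

def counitSMul [CoalgebraStruct R C] : C ⊗[R] M →ₗ[R] M :=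
  TensorProduct.lift (LinearMap.lsmul R M ∘ₗ counit)

theorem counitSMul_comp_map [CoalgebraStruct R C] [CoalgebraStruct R D] {p : C →ₗ[R] D}
    (hp : counit ∘ₗ p = counit) (q : M →ₗ[R] N) :
    counitSMul ∘ₗ map p q = q ∘ₗ counitSMul := by
  ext c m
  simp [counitSMul, ← LinearMap.congr_fun hp c]

theorem counitSMul_comp_comul [Coalgebra R C] : counitSMul ∘ₗ comul = (id : C →ₗ[R] C) :=
  lift_lsmul_comp_counit_comp_comul

end CounitSMul

theorem TensorProduct.counit_eq_lid_comp_map {R A B : Type*} [CommSemiring R]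
    [AddCommMonoid A] [Module R A] [CoalgebraStruct R A]
    [AddCommMonoid B] [Module R B] [CoalgebraStruct R B] :
    (counit : A ⊗[R] B →ₗ[R] R) = (TensorProduct.lid R R).toLinearMap ∘ₗ map counit counit := by
  ext x y
  simp [mul_comm]

section Antipode

variable {R C A : Type*} [CommSemiring R] [AddCommMonoid C] [Module R C] [Coalgebra R C]
  [Semiring A] [HopfAlgebra R A]

theorem antipode_comp_convMul_self (p : C →ₗ[R] A) (hcounit : counit ∘ₗ p = counit)
    (hcomul : comul ∘ₗ p = map p p ∘ₗ comul) : toConv (antipode R ∘ₗ p) * toConv p = 1 := by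
  let q : C →ₗc[R] A := ⟨p, hcounit, hcomul.symm⟩
  have := congr(($(antipode_mul_id (R := R) (C := A))).ofConv ∘ₗ q.toLinearMap)
  rw [convMul_comp_coalgHom_distrib] at this
  refine ofConv_injective (this.trans ?_)
  ext c
  exact congr(algebraMap R A $(LinearMap.congr_fun hcounit c))

theorem lTensor_mul_antipode_counitSMul_comul :
    map id (mul' R A) ∘ₗ (TensorProduct.assoc R A A A).toLinearMap ∘ₗ
      map id (antipode R ∘ₗ counitSMul) ∘ₗ comul = map id (Algebra.linearMap R A ∘ₗ counit) := by
  ext x y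
  have hx : ∑ i ∈ (ℛ R x).index, counit (R := R) ((ℛ R x).right i) • (ℛ R x).left i = x := by
    simpa only [map_sum, TensorProduct.rid_tmul, one_smul]
      using congr(TensorProduct.rid R A $(sum_tmul_counit_eq (ℛ R x)))
  simp [counitSMul, ← (ℛ R x).eq, ← (ℛ R y).eq, TensorProduct.sum_tmul, TensorProduct.tmul_sum]
  simp only [TensorProduct.smul_tmul', ← TensorProduct.sum_tmul, ← TensorProduct.tmul_sum, hx,
    sum_mul_antipode_eq_algebraMap_counit]

end Antipode

section MatchedPair

variable {f g : H ⊗[k] H →ₗ[k] H}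

theorem IsLeftModuleCoalgebraAction.counit_comp_eq_counit (hf : IsLeftModuleCoalgebraAction f) :
    counit ∘ₗ f = counit := by
  rw [hf.counit_comp, TensorProduct.counit_eq_lid_comp_map]

theorem IsRightModuleCoalgebraAction.counit_comp_eq_counit
    (hg : IsRightModuleCoalgebraAction g) : counit ∘ₗ g = counit := by
  rw [hg.counit_comp, TensorProduct.counit_eq_lid_comp_map]

namespace IsMatchedPairOfActions

theorem convMul_convAct_antipode_counitSMul (h : IsMatchedPairOfActions f g) :
    toConv f * toConv (convAct f g (antipode k ∘ₗ counitSMul)) = 1 := by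
  calc toConv f * toConv (convAct f g (antipode k ∘ₗ counitSMul))
      = toConv ((mul' k H ∘ₗ map f (f ∘ₗ map g id) ∘ₗ
          (TensorProduct.assoc k (H ⊗[k] H) (H ⊗[k] H) H).toLinearMap ∘ₗ
          map (sweedler2 k H) id) ∘ₗ map id (antipode k ∘ₗ counitSMul) ∘ₗ comul) := by
        rw [show sweedler2 k H = comul from rfl]
        simp only [convAct, LinearMap.convMul_def, coassoc_simps]
    _ = toConv (f ∘ₗ map id (mul' k H) ∘ₗ (TensorProduct.assoc k H H H).toLinearMap ∘ₗ
          map id (antipode k ∘ₗ counitSMul) ∘ₗ comul) := by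
        rw [← h.mp1]
        simp only [LinearMap.comp_assoc]
    _ = 1 := by
        rw [lTensor_mul_antipode_counitSMul_comul]
        ext x y
        simp [Algebra.algebraMap_eq_smul_one, h.mp2, smul_smul, mul_comm]

theorem antipode_comp_left (h : IsMatchedPairOfActions f g) :
    antipode k ∘ₗ f = convAct f g (antipode k ∘ₗ counitSMul) :=
  congr_arg ofConv <| left_inv_eq_right_inv
    (antipode_comp_convMul_self f h.left.counit_comp_eq_counit h.left.comul_comp)
    h.convMul_convAct_antipode_counitSMul

theorem convAct_antipode_comp (h : IsMatchedPairOfActions f g) :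
    convAct f (antipode k ∘ₗ g) (antipode k ∘ₗ f) = antipode k ∘ₗ counitSMul := by
  rw [h.antipode_comp_left, convAct_convAct h.left.mul_act,
    antipode_comp_convMul_self g h.right.counit_comp_eq_counit h.right.comul_comp,
    convAct_one h.left.one_act]

theorem counitSMul_comp_ybOp (h : IsMatchedPairOfActions f g) :
    counitSMul ∘ₗ ybOp k H f g = g := by
  rw [ybOp, ← comp_assoc, counitSMul_comp_map h.left.counit_comp_eq_counit, comp_assoc,
    show sweedler2 k H = comul from rfl, counitSMul_comp_comul, comp_id]

theorem comm_comp_ybOp (h : IsMatchedPairOfActions f g) :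
    (TensorProduct.comm k H H).toLinearMap ∘ₗ ybOp k H f g = map g f ∘ₗ comul := by
  rw [ybOp, h.mp5]
  simp only [coassoc_simps]
  rfl

end IsMatchedPairOfActions

end MatchedPair

/-- For a matched pair of actions `(⇀, ↼)` on a Hopf algebra `H` whose associated
Yang–Baxter operator `r` is involutive, `S(x ↼ y) = S(y) ⇀ S(x)` for all `x, y`. -/
theorem antipode_act_of_involutive (f g : H ⊗[k] H →ₗ[k] H)
    (h : IsMatchedPairOfActions f g)
    (hr : ybOp k H f g ∘ₗ ybOp k H f g = LinearMap.id) :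
    HopfAlgebra.antipode (R := k) ∘ₗ g
      = f ∘ₗ
          TensorProduct.map (HopfAlgebra.antipode (R := k)) (HopfAlgebra.antipode (R := k)) ∘ₗ
          (TensorProduct.comm k H H).toLinearMap := by
  set r := ybOp k H f g
  have cancel_r : ∀ φ ψ : H ⊗[k] H →ₗ[k] H, φ ∘ₗ r = ψ ∘ₗ r → φ = ψ := fun φ ψ e => by
    rw [← φ.comp_id, ← ψ.comp_id, ← hr, ← comp_assoc, e, comp_assoc]
  have g_comp_r : g ∘ₗ r = counitSMul := by
    rw [← h.counitSMul_comp_ybOp, comp_assoc, hr, comp_id]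
  refine cancel_r _ _ ?_
  calc (antipode k ∘ₗ g) ∘ₗ r
      = antipode k ∘ₗ counitSMul := by rw [comp_assoc, g_comp_r]
    _ = convAct f (antipode k ∘ₗ g) (antipode k ∘ₗ f) := h.convAct_antipode_comp.symm
    _ = (f ∘ₗ map (antipode k) (antipode k) ∘ₗ (TensorProduct.comm k H H).toLinearMap) ∘ₗ r := by
      rw [comp_assoc, comp_assoc, h.comm_comp_ybOp, convAct, map_comp, comp_assoc]
end
end

section
/- Let (⇀, ↼) be a matched pair of actions on the Kac–Paljutkin algebra H_8 satisfying z ⇀ g = h, z ⇀ h = g, z ⇀ gh = gh, g ↼ z = h, h ↼ z = g, gh ↼ z = gh. Then g ⇀ z = h ⇀ z = gh ⇀ z = z, and moreover: gz ⇀ z = hz ⇀ z = ghz ⇀ z = z ⇀ z; z ⇀ hz = gz ⇀ hz = hz ⇀ hz = ghz ⇀ hz = g(z ⇀ z); z ⇀ gz = gz ⇀ gz = hz ⇀ gz = ghz ⇀ gz = h(z ⇀ z); z ⇀ ghz = gz ⇀ ghz = hz ⇀ ghz = ghz ⇀ ghz = gh(z ⇀ z). -/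
open TensorProduct

noncomputable section

/-! ### The Kac–Paljutkin algebra `H₈`, characterized by generators and relations.

A Hopf algebra `H` over `k` together with elements `g h z : H` and a basis
`b = (1, g, h, gh, z, gz, hz, ghz)` satisfying the defining relations of the
Kac–Paljutkin algebra.  Since the comultiplication, counit and antipode of a Hopf
algebra are (anti)algebra morphisms, these data determine the whole Hopf algebra
structure of `H₈`. -/
structure IsKacPaljutkin (k H : Type) [Field k] [Ring H] [HopfAlgebra k H]
    (g h z : H) (b : Module.Basis (Fin 8) k H) : Prop where
  basis_eq : ⇑b = ![1, g, h, g * h, z, g * z, h * z, g * h * z]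
  g_sq : g * g = 1
  h_sq : h * h = 1
  z_sq : z * z = (2 : k)⁻¹ • (1 + g + h - g * h)
  gh_comm : g * h = h * g
  zg : z * g = h * z
  zh : z * h = g * z
  comul_g : Coalgebra.comul (R := k) g = g ⊗ₜ[k] g
  comul_h : Coalgebra.comul (R := k) h = h ⊗ₜ[k] h
  comul_z : Coalgebra.comul (R := k) z
    = (2 : k)⁻¹ • (z ⊗ₜ[k] z + (g * z) ⊗ₜ[k] z + z ⊗ₜ[k] (h * z) - (g * z) ⊗ₜ[k] (h * z))
  counit_g : Coalgebra.counit (R := k) g = 1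
  counit_h : Coalgebra.counit (R := k) h = 1
  counit_z : Coalgebra.counit (R := k) z = 1
  antipode_g : HopfAlgebra.antipode (R := k) g = g
  antipode_h : HopfAlgebra.antipode (R := k) h = h
  antipode_z : HopfAlgebra.antipode (R := k) z = z

/-- The element `z³ = (1/2)(z + gz + hz - ghz)` of the Kac–Paljutkin algebra. -/
def zCubed (k : Type) {H : Type} [Field k] [Ring H] [HopfAlgebra k H] (g h z : H) : H :=
  (2 : k)⁻¹ • (z + g * z + h * z - g * h * z)

end

/-! `G = {1, g, h, gh}` is the set of group-like elements of `H₈` (a coordinate computation in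
the basis `b`), and both actions map group-likes to group-likes, so they restrict to actions of
`G` on `G`. Since `z²` acts as `½(1 + g + h - gh)` while `z ⇀ (z ⇀ a) = a` for `a ∈ {g, h, gh}`,
linear independence of `G` forces `g ⇀` and `h ⇀` to fix `G` pointwise; the same argument in
`Hᵐᵒᵖ` makes `↼` trivial on `G`. Then `gz ⇀ a = z ⇀ a` and `x ↼ hz = x ↼ z` for `a, x ∈ G`,
which collapse the Sweedler sums over `Δz` in the matched-pair axioms to single terms:
`za = (z ⇀ a)(z ↼ a)` gives `z ↼ a = z`, `xz = (x ⇀ z)(x ↼ z)` gives `x ⇀ z = z`, and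
`z ⇀ (az) = (z ⇀ a)(z ⇀ z)`. The remaining entries follow from `(xz) ⇀ y = x ⇀ (z ⇀ y)` and
`x ⇀ (c y) = c (x ⇀ y)` for `x, c ∈ G`. -/

open Coalgebra

section MatchedPair

variable {k H : Type} [Field k] [Ring H] [HopfAlgebra k H] {lact ract : H ⊗[k] H →ₗ[k] H}

theorem IsLeftModuleCoalgebraAction.act_act (hL : IsLeftModuleCoalgebraAction lact)
    (x y a : H) : lact (x ⊗ₜ lact (y ⊗ₜ a)) = lact ((x * y) ⊗ₜ a) := by
  simpa using LinearMap.congr_fun hL.mul_act ((x ⊗ₜ[k] y) ⊗ₜ[k] a)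

theorem IsRightModuleCoalgebraAction.act_act (hR : IsRightModuleCoalgebraAction ract)
    (x y a : H) : ract (ract (x ⊗ₜ y) ⊗ₜ a) = ract (x ⊗ₜ (y * a)) := by
  simpa using LinearMap.congr_fun hR.act_mul ((x ⊗ₜ[k] y) ⊗ₜ[k] a)

def IsLeftModuleCoalgebraAction.toAlgHom (hL : IsLeftModuleCoalgebraAction lact) :
    H →ₐ[k] Module.End k H :=
  AlgHom.ofLinearMap ((TensorProduct.mk k H H).compr₂ lact)
    (LinearMap.ext hL.one_act) (fun x y => LinearMap.ext fun a => (hL.act_act x y a).symm)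

def IsRightModuleCoalgebraAction.toAlgHom (hR : IsRightModuleCoalgebraAction ract) :
    Hᵐᵒᵖ →ₐ[k] Module.End k H :=
  AlgHom.ofLinearMap
    ((TensorProduct.mk k H H).flip.compr₂ ract ∘ₗ (MulOpposite.opLinearEquiv k).symm.toLinearMap)
    (LinearMap.ext hR.act_one)
    (fun x y => LinearMap.ext fun a => (hR.act_act a y.unop x.unop).symm)

@[simp]
theorem IsLeftModuleCoalgebraAction.toAlgHom_apply (hL : IsLeftModuleCoalgebraAction lact)
    (x a : H) : hL.toAlgHom x a = lact (x ⊗ₜ a) := rfl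

@[simp]
theorem IsRightModuleCoalgebraAction.toAlgHom_apply (hR : IsRightModuleCoalgebraAction ract)
    (x : Hᵐᵒᵖ) (a : H) : hR.toAlgHom x a = ract (a ⊗ₜ x.unop) := rfl

theorem IsLeftModuleCoalgebraAction.isGroupLikeElem (hL : IsLeftModuleCoalgebraAction lact)
    {x y : H} (hx : IsGroupLikeElem k x) (hy : IsGroupLikeElem k y) :
    IsGroupLikeElem k (lact (x ⊗ₜ y)) where
  counit_eq_one := by
    simpa [hx.counit_eq_one, hy.counit_eq_one] using LinearMap.congr_fun hL.counit_comp (x ⊗ₜ y)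
  comul_eq_tmul_self := by
    simpa [sweedler2, hx.comul_eq_tmul_self, hy.comul_eq_tmul_self] using
      LinearMap.congr_fun hL.comul_comp (x ⊗ₜ y)

theorem IsRightModuleCoalgebraAction.isGroupLikeElem (hR : IsRightModuleCoalgebraAction ract)
    {x y : H} (hx : IsGroupLikeElem k x) (hy : IsGroupLikeElem k y) :
    IsGroupLikeElem k (ract (x ⊗ₜ y)) where
  counit_eq_one := by
    simpa [hx.counit_eq_one, hy.counit_eq_one] using LinearMap.congr_fun hR.counit_comp (x ⊗ₜ y)
  comul_eq_tmul_self := by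
    simpa [sweedler2, hx.comul_eq_tmul_self, hy.comul_eq_tmul_self] using
      LinearMap.congr_fun hR.comul_comp (x ⊗ₜ y)

theorem IsMatchedPairOfActions.lact_mul_of_isGroupLikeElem
    (hmp : IsMatchedPairOfActions lact ract) {x a : H} (hx : IsGroupLikeElem k x)
    (ha : IsGroupLikeElem k a) (c : H) :
    lact (x ⊗ₜ (a * c)) = lact (x ⊗ₜ a) * lact (ract (x ⊗ₜ a) ⊗ₜ c) := by
  simpa [sweedler2, hx.comul_eq_tmul_self, ha.comul_eq_tmul_self] using
    LinearMap.congr_fun hmp.mp1 ((x ⊗ₜ[k] a) ⊗ₜ[k] c)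

end MatchedPair

section KacPaljutkinCoproduct

variable {k H : Type} [Field k] [CharZero k] [Ring H] [HopfAlgebra k H]
  {lact ract : H ⊗[k] H →ₗ[k] H} {g h z : H}
  (hz : comul (R := k) z
    = (2 : k)⁻¹ • (z ⊗ₜ z + (g * z) ⊗ₜ z + z ⊗ₜ (h * z) - (g * z) ⊗ₜ (h * z)))
include hz

/- Under the hypothesis `g z ⇀ a = z ⇀ a` (resp. `x ↼ h z = x ↼ z`) the four terms of the
Sweedler sum over `Δz` cancel in pairs, so `z` enters the axiom as if it were group-like. -/

theorem IsMatchedPairOfActions.lact_mul_of_comul_eq (hmp : IsMatchedPairOfActions lact ract)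
    {a : H} (ha : IsGroupLikeElem k a) (hgz : lact ((g * z) ⊗ₜ a) = lact (z ⊗ₜ a)) (c : H) :
    lact (z ⊗ₜ (a * c)) = lact (z ⊗ₜ a) * lact (ract (z ⊗ₜ a) ⊗ₜ c) := by
  have := LinearMap.congr_fun hmp.mp1 ((z ⊗ₜ[k] a) ⊗ₜ[k] c)
  simp [sweedler2, hz, ha.comul_eq_tmul_self, TensorProduct.add_tmul, TensorProduct.sub_tmul,
    ← TensorProduct.smul_tmul', hgz] at this
  rw [this]; module

theorem IsMatchedPairOfActions.mul_eq_of_comul_eq_left (hmp : IsMatchedPairOfActions lact ract)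
    {a : H} (ha : IsGroupLikeElem k a) (hgz : lact ((g * z) ⊗ₜ a) = lact (z ⊗ₜ a)) :
    z * a = lact (z ⊗ₜ a) * ract (z ⊗ₜ a) := by
  have := LinearMap.congr_fun hmp.factor (z ⊗ₜ[k] a)
  simp [sweedler2, hz, ha.comul_eq_tmul_self, TensorProduct.add_tmul, TensorProduct.sub_tmul,
    ← TensorProduct.smul_tmul', hgz] at this
  rw [this]; module

theorem IsMatchedPairOfActions.mul_eq_of_comul_eq_right (hmp : IsMatchedPairOfActions lact ract)
    {x : H} (hx : IsGroupLikeElem k x) (hhz : ract (x ⊗ₜ (h * z)) = ract (x ⊗ₜ z)) :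
    x * z = lact (x ⊗ₜ z) * ract (x ⊗ₜ z) := by
  have := LinearMap.congr_fun hmp.factor (x ⊗ₜ[k] z)
  simp [sweedler2, hz, hx.comul_eq_tmul_self, TensorProduct.tmul_add, TensorProduct.tmul_sub,
    hhz] at this
  rw [this]; module

end KacPaljutkinCoproduct

theorem Function.apply_eq_self_of_apply_apply_eq {α : Type*} {f : α → α} {S : Set α} {a : α}
    (hfa : f (f a) = a) (hmem : f a ∈ S) (hfix : ∀ y ∈ S, y ≠ a → f y = y) : f a = a := by
  by_contra hne
  exact hne ((hfix _ hmem hne).symm.trans hfa)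

theorem AlgHom.apply_add_apply_eq_of_mul_self_eq {k A M : Type*} [Field k] [CharZero k] [Ring A]
    [Algebra k A] [AddCommGroup M] [Module k M] (ρ : A →ₐ[k] Module.End k M) {g' h' z' : A}
    (hzz : z' * z' = (2 : k)⁻¹ • (1 + g' + h' - g' * h')) {u : M} (hu : ρ z' (ρ z' u) = u) :
    ρ g' u + ρ h' u = u + ρ g' (ρ h' u) := by
  have e : ρ (z' * z') u = u := by rw [map_mul, Module.End.mul_apply, hu]
  simp only [hzz, map_smul, map_sub, map_add, map_one, map_mul, LinearMap.smul_apply,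
    LinearMap.sub_apply, LinearMap.add_apply, Module.End.one_apply, Module.End.mul_apply] at e
  linear_combination (norm := module) (2 : k) • e

theorem exists_eq_one_of_sum_eq_one {ι K : Type*} [Fintype ι] [Semiring K] [NoZeroDivisors K]
    [Nontrivial K] {f : ι → K} (hsum : ∑ i, f i = 1) (hmul : Pairwise fun i j => f i * f j = 0) :
    ∃ i, f i = 1 ∧ ∀ j ≠ i, f j = 0 := by
  obtain ⟨i, -, hi⟩ := Finset.exists_ne_zero_of_sum_ne_zero (hsum ▸ one_ne_zero : ∑ i, f i ≠ 0)
  have hj : ∀ j ≠ i, f j = 0 := fun j hji => (mul_eq_zero.mp (hmul hji.symm)).resolve_left hi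
  refine ⟨i, ?_, hj⟩
  rwa [Finset.sum_eq_single i (fun j _ => hj j) (by simp)] at hsum

theorem Module.Basis.add_eq_add_iff {ι R M : Type*} [Ring R] [NeZero (2 : R)] [AddCommGroup M]
    [Module R M] (b : Module.Basis ι R M) {i j i' j' : ι} :
    b i + b j = b i' + b j' ↔ (i = i' ∧ j = j') ∨ (i = j' ∧ j = i') := by
  have : Nontrivial R := ⟨⟨2, 0, two_ne_zero⟩⟩
  rw [← b.repr.injective.eq_iff]
  simp only [map_add, Module.Basis.repr_self]
  rw [Finsupp.single_add_single_eq_single_add_single one_ne_zero one_ne_zero, one_add_one_eq_two]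
  simp [two_ne_zero]

theorem Module.Basis.repr_mul_repr_of_isGroupLikeElem {k C ι : Type*} [CommRing k]
    [AddCommGroup C] [Module k C] [Coalgebra k C] [Fintype ι] (b : Module.Basis ι k C) {u : C}
    (hu : IsGroupLikeElem k u) (i j : ι) :
    b.repr u i * b.repr u j
      = ∑ l, b.repr u l * (b.tensorProduct b).repr (comul (R := k) (b l)) (i, j) := by
  calc b.repr u i * b.repr u j = (b.tensorProduct b).repr (u ⊗ₜ u) (i, j) := by simp [mul_comm]
    _ = (b.tensorProduct b).repr (comul (R := k) (∑ l, b.repr u l • b l)) (i, j) := by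
      rw [b.sum_repr, hu.comul_eq_tmul_self]
    _ = _ := by
      simp only [map_sum, map_smul, Finsupp.coe_finsetSum, Finset.sum_apply, Finsupp.smul_apply,
        smul_eq_mul]

namespace IsKacPaljutkin

section Algebra

variable {k H : Type} [Field k] [Ring H] [HopfAlgebra k H] {g h z : H}
  {b : Module.Basis (Fin 8) k H} {lact ract : H ⊗[k] H →ₗ[k] H}

theorem basis_apply (hKP : IsKacPaljutkin k H g h z b) :
    b 0 = 1 ∧ b 1 = g ∧ b 2 = h ∧ b 3 = g * h ∧ b 4 = z ∧ b 5 = g * z ∧ b 6 = h * z ∧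
      b 7 = g * h * z := by
  simp [hKP.basis_eq]

theorem exists_basis_eq_of_mem (hKP : IsKacPaljutkin k H g h z b) {u : H}
    (hu : u ∈ ({1, g, h, g * h} : Set H)) : ∃ i, b i = u := by
  obtain ⟨h0, h1, h2, h3, -⟩ := hKP.basis_apply
  rcases hu with rfl | rfl | rfl | rfl
  exacts [⟨0, h0⟩, ⟨1, h1⟩, ⟨2, h2⟩, ⟨3, h3⟩]

theorem isGroupLikeElem_of_mem (hKP : IsKacPaljutkin k H g h z b) {u : H}
    (hu : u ∈ ({1, g, h, g * h} : Set H)) : IsGroupLikeElem k u := by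
  have hg : IsGroupLikeElem k g := ⟨hKP.counit_g, hKP.comul_g⟩
  have hh : IsGroupLikeElem k h := ⟨hKP.counit_h, hKP.comul_h⟩
  rcases hu with rfl | rfl | rfl | rfl
  exacts [.one, hg, hh, hg.mul hh]

theorem mul_self_of_mem (hKP : IsKacPaljutkin k H g h z b) {c : H}
    (hc : c ∈ ({1, g, h, g * h} : Set H)) : c * c = 1 := by
  rcases hc with rfl | rfl | rfl | rfl
  · exact one_mul 1
  · exact hKP.g_sq
  · exact hKP.h_sq
  · rw [mul_assoc, ← mul_assoc h, ← hKP.gh_comm, mul_assoc, hKP.h_sq, mul_one, hKP.g_sq]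

theorem mul_left_cancel_of_mem (hKP : IsKacPaljutkin k H g h z b) {c x y : H}
    (hc : c ∈ ({1, g, h, g * h} : Set H)) (e : c * x = c * y) : x = y := by
  simpa [← mul_assoc, hKP.mul_self_of_mem hc] using congrArg (c * ·) e

theorem mul_right_cancel_of_mem (hKP : IsKacPaljutkin k H g h z b) {c x y : H}
    (hc : c ∈ ({1, g, h, g * h} : Set H)) (e : x * c = y * c) : x = y := by
  simpa [mul_assoc, hKP.mul_self_of_mem hc] using congrArg (· * c) e

theorem z_mul_mul (hKP : IsKacPaljutkin k H g h z b) : z * (g * h) = g * h * z := by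
  rw [← mul_assoc, hKP.zg, mul_assoc, hKP.zh, ← mul_assoc, hKP.gh_comm]

theorem z_mul_eq_lact_mul_z (hKP : IsKacPaljutkin k H g h z b)
    (h1 : lact (z ⊗ₜ g) = h) (h2 : lact (z ⊗ₜ h) = g) (h3 : lact (z ⊗ₜ (g * h)) = g * h)
    {a : H} (ha : a ∈ ({g, h, g * h} : Set H)) :
    z * a = lact (z ⊗ₜ a) * z ∧ lact (z ⊗ₜ a) ∈ ({g, h, g * h} : Set H) := by
  rcases ha with rfl | rfl | rfl
  · simp [h1, hKP.zg]
  · simp [h2, hKP.zh]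
  · simp [h3, hKP.z_mul_mul]

theorem mul_z_eq_z_mul_ract (hKP : IsKacPaljutkin k H g h z b)
    (h4 : ract (g ⊗ₜ z) = h) (h5 : ract (h ⊗ₜ z) = g) (h6 : ract ((g * h) ⊗ₜ z) = g * h)
    {x : H} (hx : x ∈ ({g, h, g * h} : Set H)) :
    x * z = z * ract (x ⊗ₜ z) ∧ ract (x ⊗ₜ z) ∈ ({g, h, g * h} : Set H) := by
  rcases hx with rfl | rfl | rfl
  · simp [h4, hKP.zh]
  · simp [h5, hKP.zg]
  · simp [h6, hKP.z_mul_mul]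

theorem comul_basis (hKP : IsKacPaljutkin k H g h z b) :
    comul (R := k) (b 0) = b 0 ⊗ₜ b 0 ∧ comul (R := k) (b 1) = b 1 ⊗ₜ b 1 ∧
    comul (R := k) (b 2) = b 2 ⊗ₜ b 2 ∧ comul (R := k) (b 3) = b 3 ⊗ₜ b 3 ∧
    comul (R := k) (b 4) = (2 : k)⁻¹ • (b 4 ⊗ₜ b 4 + b 5 ⊗ₜ b 4 + b 4 ⊗ₜ b 6 - b 5 ⊗ₜ b 6) ∧
    comul (R := k) (b 5) = (2 : k)⁻¹ • (b 5 ⊗ₜ b 5 + b 4 ⊗ₜ b 5 + b 5 ⊗ₜ b 7 - b 4 ⊗ₜ b 7) ∧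
    comul (R := k) (b 6) = (2 : k)⁻¹ • (b 6 ⊗ₜ b 6 + b 7 ⊗ₜ b 6 + b 6 ⊗ₜ b 4 - b 7 ⊗ₜ b 4) ∧
    comul (R := k) (b 7) = (2 : k)⁻¹ • (b 7 ⊗ₜ b 7 + b 6 ⊗ₜ b 7 + b 7 ⊗ₜ b 5 - b 6 ⊗ₜ b 5) := by
  obtain ⟨h0, h1, h2, h3, h4, h5, h6, h7⟩ := hKP.basis_apply
  have hgg : ∀ x, g * (g * x) = x := fun x => by rw [← mul_assoc, hKP.g_sq, one_mul]
  have hhh : ∀ x, h * (h * x) = x := fun x => by rw [← mul_assoc, hKP.h_sq, one_mul]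
  have hhg : ∀ x, h * (g * x) = g * (h * x) := fun x => by
    rw [← mul_assoc, ← hKP.gh_comm, mul_assoc]
  simp only [h0, h1, h2, h3, h4, h5, h6, h7, mul_assoc, Bialgebra.comul_mul, hKP.comul_g,
    hKP.comul_h, hKP.comul_z, Bialgebra.comul_one, Algebra.TensorProduct.one_def,
    Algebra.TensorProduct.tmul_mul_tmul, smul_add, smul_sub, mul_add, mul_sub, mul_smul_comm,
    hgg, hhh, hhg, true_and]

theorem counit_basis (hKP : IsKacPaljutkin k H g h z b) (l : Fin 8) :
    counit (R := k) (b l) = 1 := by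
  obtain ⟨h0, h1, h2, h3, h4, h5, h6, h7⟩ := hKP.basis_apply
  fin_cases l <;>
    simp [h0, h1, h2, h3, h4, h5, h6, h7, hKP.counit_g, hKP.counit_h, hKP.counit_z]

end Algebra

section Actions

variable {k H : Type} [Field k] [CharZero k] [Ring H] [HopfAlgebra k H] {g h z : H}
  {b : Module.Basis (Fin 8) k H} {lact ract : H ⊗[k] H →ₗ[k] H}

theorem add_eq_add_of_mem (hKP : IsKacPaljutkin k H g h z b) {p q r s : H}
    (hp : p ∈ ({1, g, h, g * h} : Set H)) (hq : q ∈ ({1, g, h, g * h} : Set H))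
    (hr : r ∈ ({1, g, h, g * h} : Set H)) (hs : s ∈ ({1, g, h, g * h} : Set H))
    (e : p + q = r + s) : (p = r ∧ q = s) ∨ (p = s ∧ q = r) := by
  obtain ⟨i, rfl⟩ := hKP.exists_basis_eq_of_mem hp
  obtain ⟨j, rfl⟩ := hKP.exists_basis_eq_of_mem hq
  obtain ⟨i', rfl⟩ := hKP.exists_basis_eq_of_mem hr
  obtain ⟨j', rfl⟩ := hKP.exists_basis_eq_of_mem hs
  rcases b.add_eq_add_iff.mp e with ⟨rfl, rfl⟩ | ⟨rfl, rfl⟩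
  exacts [.inl ⟨rfl, rfl⟩, .inr ⟨rfl, rfl⟩]

theorem repr_eq_zero_of_isGroupLikeElem (hKP : IsKacPaljutkin k H g h z b) {u : H}
    (hu : IsGroupLikeElem k u) :
    b.repr u 4 = 0 ∧ b.repr u 5 = 0 ∧ b.repr u 6 = 0 ∧ b.repr u 7 = 0 := by
  obtain ⟨C0, C1, C2, C3, C4, C5, C6, C7⟩ := hKP.comul_basis
  have e := fun i j => b.repr_mul_repr_of_isGroupLikeElem hu i j
  simp only [Fin.sum_univ_eight, C0, C1, C2, C3, C4, C5, C6, C7, map_smul, map_add, map_sub,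
    Finsupp.smul_apply, Finsupp.add_apply, Finsupp.sub_apply,
    Module.Basis.tensorProduct_repr_tmul_apply, Module.Basis.repr_self, Finsupp.single_apply,
    smul_eq_mul] at e
  have e44 := e 4 4
  have e46 := e 4 6
  have e64 := e 6 4
  have e47 := e 4 7
  have e74 := e 7 4
  have e56 := e 5 6
  have e67 := e 6 7
  simp only [Fin.isValue, Fin.reduceEq, ↓reduceIte] at e44 e46 e64 e47 e74 e56 e67
  set a := b.repr u
  have h46 : a 4 = a 6 := by linear_combination -2 * e46 + 2 * e64
  have h56 : a 5 = a 6 := by linear_combination 2 * e47 - 2 * e74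
  have h4 : a 4 = 0 := by linear_combination e56 - e44 - a 6 * h56 + (a 6 + a 4) * h46
  have h6 : a 6 = 0 := h46 ▸ h4
  exact ⟨h4, h56.trans h6, h6, by linear_combination -2 * e67 + 2 * a 7 * h6⟩

theorem pairwise_repr_mul_repr_eq_zero (hKP : IsKacPaljutkin k H g h z b) {u : H}
    (hu : IsGroupLikeElem k u) : Pairwise fun i j => b.repr u i * b.repr u j = 0 := by
  obtain ⟨h4, h5, h6, h7⟩ := hKP.repr_eq_zero_of_isGroupLikeElem hu
  obtain ⟨C0, C1, C2, C3, -⟩ := hKP.comul_basis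
  intro i j hij
  rw [b.repr_mul_repr_of_isGroupLikeElem hu, Fin.sum_univ_eight, h4, h5, h6, h7]
  simp only [C0, C1, C2, C3, Module.Basis.tensorProduct_repr_tmul_apply, Module.Basis.repr_self,
    Finsupp.single_apply, smul_eq_mul, zero_mul, add_zero]
  fin_cases i <;> fin_cases j <;> simp_all

theorem mem_of_isGroupLikeElem (hKP : IsKacPaljutkin k H g h z b) {u : H}
    (hu : IsGroupLikeElem k u) : u ∈ ({1, g, h, g * h} : Set H) := by
  have hsum : ∑ l, b.repr u l = 1 := by
    have := hu.counit_eq_one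
    rw [← b.sum_repr u, map_sum] at this
    simpa [hKP.counit_basis] using this
  obtain ⟨i, hi, hj⟩ := exists_eq_one_of_sum_eq_one hsum (hKP.pairwise_repr_mul_repr_eq_zero hu)
  have hui : u = b i := by
    conv_lhs => rw [← b.sum_repr u]
    rw [Finset.sum_eq_single i (fun j _ hji => by rw [hj j hji, zero_smul]) (by simp), hi,
      one_smul]
  obtain ⟨b0, b1, b2, b3, -⟩ := hKP.basis_apply
  obtain ⟨h4, h5, h6, h7⟩ := hKP.repr_eq_zero_of_isGroupLikeElem hu
  fin_cases i <;> simp_all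

theorem apply_eq_self_of_swap {A : Type} [Ring A] [Algebra k A]
    (hKP : IsKacPaljutkin k H g h z b) (ρ : A →ₐ[k] Module.End k H) {g' h' z' : A}
    (hg' : g' * g' = 1) (hzg : z' * g' = h' * z') (hzh : z' * h' = g' * z')
    (hzz : z' * z' = (2 : k)⁻¹ • (1 + g' + h' - g' * h'))
    (hmem : ∀ x ∈ ({g', h'} : Set A), ∀ a ∈ ({1, g, h, g * h} : Set H),
      ρ x a ∈ ({1, g, h, g * h} : Set H))
    (hone : ∀ x ∈ ({g', h'} : Set A), ρ x 1 = 1)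
    (hz_g : ρ z' g = h) (hz_h : ρ z' h = g) (hz_gh : ρ z' (g * h) = g * h)
    {a : H} (ha : a ∈ ({1, g, h, g * h} : Set H)) : ρ g' a = a ∧ ρ h' a = a := by
  have hρ : ∀ x y u, ρ x (ρ y u) = ρ (x * y) u := fun x y u => by rw [map_mul]; rfl
  have hg'_mem : g' ∈ ({g', h'} : Set A) := .inl rfl
  have hh'_mem : h' ∈ ({g', h'} : Set A) := .inr rfl
  have fix_g : ∀ u ∈ ({1, g, h, g * h} : Set H),
      (∀ y ∈ ({1, g, h, g * h} : Set H), y ≠ u → ρ g' y = y) → ρ g' u = u :=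
    fun u hu => Function.apply_eq_self_of_apply_apply_eq (by rw [hρ, hg', map_one]; rfl)
      (hmem g' hg'_mem u hu)
  have conj_g : ∀ u, ρ h' (ρ z' u) = ρ z' (ρ g' u) := fun u => by rw [hρ, hρ, hzg]
  have conj_h : ∀ u, ρ g' (ρ z' u) = ρ z' (ρ h' u) := fun u => by rw [hρ, hρ, hzh]
  obtain ⟨g_gh, h_gh⟩ : ρ g' (g * h) = g * h ∧ ρ h' (g * h) = g * h := by
    have e := ρ.apply_add_apply_eq_of_mul_self_eq hzz (u := g * h) (by rw [hz_gh, hz_gh])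
    rcases hKP.add_eq_add_of_mem (hmem _ hg'_mem _ (by simp)) (hmem _ hh'_mem _ (by simp))
      (by simp) (hmem _ hg'_mem _ (hmem _ hh'_mem _ (by simp))) e with ⟨hg, -⟩ | ⟨-, hh⟩
    · exact ⟨hg, by rw [← hz_gh, conj_g, hg, hz_gh]⟩
    · exact ⟨by rw [← hz_gh, conj_h, hh, hz_gh], hh⟩
  have g_g : ρ g' g = g := by
    have e := ρ.apply_add_apply_eq_of_mul_self_eq hzz (u := g) (by rw [hz_g, hz_h])
    rcases hKP.add_eq_add_of_mem (hmem _ hg'_mem _ (by simp)) (hmem _ hh'_mem _ (by simp))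
      (by simp) (hmem _ hg'_mem _ (hmem _ hh'_mem _ (by simp))) e with ⟨hg, -⟩ | ⟨-, hh⟩
    · exact hg
    · have g_h : ρ g' h = h := by rw [← hz_g, conj_h, hh]
      refine fix_g g (by simp) ?_
      rintro y (rfl | rfl | rfl | rfl) hy
      exacts [hone g' hg'_mem, (hy rfl).elim, g_h, g_gh]
  have g_h : ρ g' h = h := by
    refine fix_g h (by simp) ?_
    rintro y (rfl | rfl | rfl | rfl) hy
    exacts [hone g' hg'_mem, g_g, (hy rfl).elim, g_gh]
  rcases ha with rfl | rfl | rfl | rfl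
  · exact ⟨hone g' hg'_mem, hone h' hh'_mem⟩
  · exact ⟨g_g, by rw [← hz_h, conj_g, g_h]⟩
  · exact ⟨g_h, by rw [← hz_g, conj_g, g_g]⟩
  · exact ⟨g_gh, h_gh⟩

theorem lact_eq_right_of_mem (hKP : IsKacPaljutkin k H g h z b)
    (hmp : IsMatchedPairOfActions lact ract)
    (h1 : lact (z ⊗ₜ g) = h) (h2 : lact (z ⊗ₜ h) = g) (h3 : lact (z ⊗ₜ (g * h)) = g * h)
    {x a : H} (hx : x ∈ ({1, g, h, g * h} : Set H)) (ha : a ∈ ({1, g, h, g * h} : Set H)) :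
    lact (x ⊗ₜ a) = a := by
  have hL := hmp.left
  have fix := hKP.apply_eq_self_of_swap hL.toAlgHom hKP.g_sq hKP.zg hKP.zh hKP.z_sq
    (fun x hx a ha => hKP.mem_of_isGroupLikeElem <| hL.isGroupLikeElem
      (hKP.isGroupLikeElem_of_mem (by rcases hx with rfl | rfl <;> simp))
      (hKP.isGroupLikeElem_of_mem ha))
    (fun x hx => by
      rw [IsLeftModuleCoalgebraAction.toAlgHom_apply, hmp.mp2,
        (hKP.isGroupLikeElem_of_mem (by rcases hx with rfl | rfl <;> simp)).counit_eq_one,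
        one_smul])
    h1 h2 h3 ha
  simp only [IsLeftModuleCoalgebraAction.toAlgHom_apply] at fix
  rcases hx with rfl | rfl | rfl | rfl
  · exact hL.one_act a
  · exact fix.1
  · exact fix.2
  · rw [← hL.act_act, fix.2, fix.1]

theorem ract_eq_left_of_mem (hKP : IsKacPaljutkin k H g h z b)
    (hmp : IsMatchedPairOfActions lact ract)
    (h4 : ract (g ⊗ₜ z) = h) (h5 : ract (h ⊗ₜ z) = g) (h6 : ract ((g * h) ⊗ₜ z) = g * h)
    {x a : H} (hx : x ∈ ({1, g, h, g * h} : Set H)) (ha : a ∈ ({1, g, h, g * h} : Set H)) :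
    ract (x ⊗ₜ a) = x := by
  have hR := hmp.right
  have fix := hKP.apply_eq_self_of_swap hR.toAlgHom (g' := .op g) (h' := .op h) (z' := .op z)
    (by rw [← MulOpposite.op_mul, hKP.g_sq, MulOpposite.op_one])
    (by rw [← MulOpposite.op_mul, ← MulOpposite.op_mul, hKP.zh])
    (by rw [← MulOpposite.op_mul, ← MulOpposite.op_mul, hKP.zg])
    (MulOpposite.unop_injective (by simp [hKP.z_sq, hKP.gh_comm]))
    (fun a' ha' x hx => hKP.mem_of_isGroupLikeElem <| hR.isGroupLikeElem
      (hKP.isGroupLikeElem_of_mem hx)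
      (hKP.isGroupLikeElem_of_mem (by rcases ha' with rfl | rfl <;> simp)))
    (fun a' ha' => by
      rw [IsRightModuleCoalgebraAction.toAlgHom_apply, hmp.mp4,
        (hKP.isGroupLikeElem_of_mem (by rcases ha' with rfl | rfl <;> simp)).counit_eq_one,
        one_smul])
    h4 h5 h6 hx
  simp only [IsRightModuleCoalgebraAction.toAlgHom_apply, MulOpposite.unop_op] at fix
  rcases ha with rfl | rfl | rfl | rfl
  · exact hR.act_one x
  · exact fix.1
  · exact fix.2
  · rw [← hR.act_act, fix.1, fix.2]

theorem lact_gz_tmul (hKP : IsKacPaljutkin k H g h z b) (hmp : IsMatchedPairOfActions lact ract)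
    (h1 : lact (z ⊗ₜ g) = h) (h2 : lact (z ⊗ₜ h) = g) (h3 : lact (z ⊗ₜ (g * h)) = g * h)
    {a : H} (ha : a ∈ ({g, h, g * h} : Set H)) : lact ((g * z) ⊗ₜ a) = lact (z ⊗ₜ a) := by
  rw [← hmp.left.act_act, hKP.lact_eq_right_of_mem hmp h1 h2 h3 (by simp)
    (Set.subset_insert _ _ (hKP.z_mul_eq_lact_mul_z h1 h2 h3 ha).2)]

theorem ract_z_tmul (hKP : IsKacPaljutkin k H g h z b) (hmp : IsMatchedPairOfActions lact ract)
    (h1 : lact (z ⊗ₜ g) = h) (h2 : lact (z ⊗ₜ h) = g) (h3 : lact (z ⊗ₜ (g * h)) = g * h)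
    {a : H} (ha : a ∈ ({g, h, g * h} : Set H)) : ract (z ⊗ₜ a) = z := by
  obtain ⟨hza, hmem⟩ := hKP.z_mul_eq_lact_mul_z h1 h2 h3 ha
  have e := hmp.mul_eq_of_comul_eq_left hKP.comul_z
    (hKP.isGroupLikeElem_of_mem (Set.subset_insert _ _ ha)) (hKP.lact_gz_tmul hmp h1 h2 h3 ha)
  exact hKP.mul_left_cancel_of_mem (Set.subset_insert _ _ hmem) (e.symm.trans hza)

theorem lact_tmul_z (hKP : IsKacPaljutkin k H g h z b) (hmp : IsMatchedPairOfActions lact ract)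
    (h4 : ract (g ⊗ₜ z) = h) (h5 : ract (h ⊗ₜ z) = g) (h6 : ract ((g * h) ⊗ₜ z) = g * h)
    {x : H} (hx : x ∈ ({g, h, g * h} : Set H)) : lact (x ⊗ₜ z) = z := by
  obtain ⟨hxz, hmem⟩ := hKP.mul_z_eq_z_mul_ract h4 h5 h6 hx
  have hhz : ract (x ⊗ₜ (h * z)) = ract (x ⊗ₜ z) := by
    rw [← hmp.right.act_act,
      hKP.ract_eq_left_of_mem hmp h4 h5 h6 (Set.subset_insert _ _ hx) (by simp)]
  have e := hmp.mul_eq_of_comul_eq_right hKP.comul_z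
    (hKP.isGroupLikeElem_of_mem (Set.subset_insert _ _ hx)) hhz
  exact hKP.mul_right_cancel_of_mem (Set.subset_insert _ _ hmem) (e.symm.trans hxz)

theorem lact_mul_z_tmul_z (hKP : IsKacPaljutkin k H g h z b)
    (hmp : IsMatchedPairOfActions lact ract)
    (h4 : ract (g ⊗ₜ z) = h) (h5 : ract (h ⊗ₜ z) = g) (h6 : ract ((g * h) ⊗ₜ z) = g * h)
    {x : H} (hx : x ∈ ({g, h, g * h} : Set H)) : lact ((x * z) ⊗ₜ z) = lact (z ⊗ₜ z) := by
  obtain ⟨hxz, hmem⟩ := hKP.mul_z_eq_z_mul_ract h4 h5 h6 hx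
  rw [hxz, ← hmp.left.act_act, hKP.lact_tmul_z hmp h4 h5 h6 hmem]

theorem lact_z_tmul_mul_z (hKP : IsKacPaljutkin k H g h z b)
    (hmp : IsMatchedPairOfActions lact ract)
    (h1 : lact (z ⊗ₜ g) = h) (h2 : lact (z ⊗ₜ h) = g) (h3 : lact (z ⊗ₜ (g * h)) = g * h)
    {a : H} (ha : a ∈ ({g, h, g * h} : Set H)) :
    lact (z ⊗ₜ (a * z)) = lact (z ⊗ₜ a) * lact (z ⊗ₜ z) := by
  rw [hmp.lact_mul_of_comul_eq hKP.comul_z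
    (hKP.isGroupLikeElem_of_mem (Set.subset_insert _ _ ha))
    (hKP.lact_gz_tmul hmp h1 h2 h3 ha), hKP.ract_z_tmul hmp h1 h2 h3 ha]

theorem lact_tmul_mul_of_mem (hKP : IsKacPaljutkin k H g h z b)
    (hmp : IsMatchedPairOfActions lact ract)
    (h1 : lact (z ⊗ₜ g) = h) (h2 : lact (z ⊗ₜ h) = g) (h3 : lact (z ⊗ₜ (g * h)) = g * h)
    (h4 : ract (g ⊗ₜ z) = h) (h5 : ract (h ⊗ₜ z) = g) (h6 : ract ((g * h) ⊗ₜ z) = g * h)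
    {x c : H} (hx : x ∈ ({1, g, h, g * h} : Set H)) (hc : c ∈ ({1, g, h, g * h} : Set H))
    (y : H) : lact (x ⊗ₜ (c * y)) = c * lact (x ⊗ₜ y) := by
  rw [hmp.lact_mul_of_isGroupLikeElem (hKP.isGroupLikeElem_of_mem hx)
    (hKP.isGroupLikeElem_of_mem hc), hKP.lact_eq_right_of_mem hmp h1 h2 h3 hx hc,
    hKP.ract_eq_left_of_mem hmp h4 h5 h6 hx hc]

theorem lact_mul_z_tmul_mul_z (hKP : IsKacPaljutkin k H g h z b)
    (hmp : IsMatchedPairOfActions lact ract)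
    (h1 : lact (z ⊗ₜ g) = h) (h2 : lact (z ⊗ₜ h) = g) (h3 : lact (z ⊗ₜ (g * h)) = g * h)
    (h4 : ract (g ⊗ₜ z) = h) (h5 : ract (h ⊗ₜ z) = g) (h6 : ract ((g * h) ⊗ₜ z) = g * h)
    {x a : H} (hx : x ∈ ({g, h, g * h} : Set H)) (ha : a ∈ ({g, h, g * h} : Set H)) :
    lact ((x * z) ⊗ₜ (a * z)) = lact (z ⊗ₜ a) * lact (z ⊗ₜ z) := by
  rw [← hmp.left.act_act, hKP.lact_z_tmul_mul_z hmp h1 h2 h3 ha,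
    hKP.lact_tmul_mul_of_mem hmp h1 h2 h3 h4 h5 h6 (Set.subset_insert _ _ hx)
      (Set.subset_insert _ _ (hKP.z_mul_eq_lact_mul_z h1 h2 h3 ha).2),
    hmp.left.act_act, hKP.lact_mul_z_tmul_z hmp h4 h5 h6 hx]

end Actions

end IsKacPaljutkin

theorem situation2_left_action_table_general {k H : Type} [Field k] [CharZero k]
    [Ring H] [HopfAlgebra k H] (g h z : H) (b : Module.Basis (Fin 8) k H)
    (hKP : IsKacPaljutkin k H g h z b)
    (lact ract : H ⊗[k] H →ₗ[k] H) (hmp : IsMatchedPairOfActions lact ract)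
    (h1 : lact (z ⊗ₜ[k] g) = h) (h2 : lact (z ⊗ₜ[k] h) = g)
    (h3 : lact (z ⊗ₜ[k] (g * h)) = g * h)
    (h4 : ract (g ⊗ₜ[k] z) = h) (h5 : ract (h ⊗ₜ[k] z) = g)
    (h6 : ract ((g * h) ⊗ₜ[k] z) = g * h) :
    (lact (g ⊗ₜ[k] z) = z ∧ lact (h ⊗ₜ[k] z) = z ∧ lact ((g * h) ⊗ₜ[k] z) = z) ∧
    (lact ((g * z) ⊗ₜ[k] z) = lact (z ⊗ₜ[k] z) ∧
      lact ((h * z) ⊗ₜ[k] z) = lact (z ⊗ₜ[k] z) ∧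
      lact ((g * h * z) ⊗ₜ[k] z) = lact (z ⊗ₜ[k] z)) ∧
    (lact (z ⊗ₜ[k] (h * z)) = g * lact (z ⊗ₜ[k] z) ∧
      lact ((g * z) ⊗ₜ[k] (h * z)) = g * lact (z ⊗ₜ[k] z) ∧
      lact ((h * z) ⊗ₜ[k] (h * z)) = g * lact (z ⊗ₜ[k] z) ∧
      lact ((g * h * z) ⊗ₜ[k] (h * z)) = g * lact (z ⊗ₜ[k] z)) ∧
    (lact (z ⊗ₜ[k] (g * z)) = h * lact (z ⊗ₜ[k] z) ∧
      lact ((g * z) ⊗ₜ[k] (g * z)) = h * lact (z ⊗ₜ[k] z) ∧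
      lact ((h * z) ⊗ₜ[k] (g * z)) = h * lact (z ⊗ₜ[k] z) ∧
      lact ((g * h * z) ⊗ₜ[k] (g * z)) = h * lact (z ⊗ₜ[k] z)) ∧
    (lact (z ⊗ₜ[k] (g * h * z)) = g * h * lact (z ⊗ₜ[k] z) ∧
      lact ((g * z) ⊗ₜ[k] (g * h * z)) = g * h * lact (z ⊗ₜ[k] z) ∧
      lact ((h * z) ⊗ₜ[k] (g * h * z)) = g * h * lact (z ⊗ₜ[k] z) ∧
      lact ((g * h * z) ⊗ₜ[k] (g * h * z)) = g * h * lact (z ⊗ₜ[k] z)) := by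
  obtain ⟨hg, hh, hgh⟩ : g ∈ ({g, h, g * h} : Set H) ∧ h ∈ ({g, h, g * h} : Set H) ∧
      g * h ∈ ({g, h, g * h} : Set H) := by simp
  have act_z := fun {x} (hx : x ∈ ({g, h, g * h} : Set H)) => hKP.lact_tmul_z hmp h4 h5 h6 hx
  have mul_z_act_z := fun {x} (hx : x ∈ ({g, h, g * h} : Set H)) =>
    hKP.lact_mul_z_tmul_z hmp h4 h5 h6 hx
  have z_act_mul_z := fun {a} (ha : a ∈ ({g, h, g * h} : Set H)) =>
    hKP.lact_z_tmul_mul_z hmp h1 h2 h3 ha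
  have mul_z_act_mul_z := fun {x a} (hx : x ∈ ({g, h, g * h} : Set H))
    (ha : a ∈ ({g, h, g * h} : Set H)) => hKP.lact_mul_z_tmul_mul_z hmp h1 h2 h3 h4 h5 h6 hx ha
  refine ⟨⟨act_z hg, act_z hh, act_z hgh⟩, ⟨mul_z_act_z hg, mul_z_act_z hh, mul_z_act_z hgh⟩,
    ?_, ?_, ?_⟩
  · have e : _ ∧ _ ∧ _ ∧ _ :=
      ⟨z_act_mul_z hh, mul_z_act_mul_z hg hh, mul_z_act_mul_z hh hh, mul_z_act_mul_z hgh hh⟩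
    rwa [h2] at e
  · have e : _ ∧ _ ∧ _ ∧ _ :=
      ⟨z_act_mul_z hg, mul_z_act_mul_z hg hg, mul_z_act_mul_z hh hg, mul_z_act_mul_z hgh hg⟩
    rwa [h1] at e
  · have e : _ ∧ _ ∧ _ ∧ _ :=
      ⟨z_act_mul_z hgh, mul_z_act_mul_z hg hgh, mul_z_act_mul_z hh hgh, mul_z_act_mul_z hgh hgh⟩
    rwa [h3] at e

/-- In Situation 2 (`z` swaps `g` and `h` on both sides), the left action is determined
by `z ⇀ z` as in Eq. (11) of the paper. -/
theorem situation2_left_action_table {k H : Type} [Field k] [CharZero k] [IsAlgClosed k]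
    [Ring H] [HopfAlgebra k H] (g h z : H) (b : Module.Basis (Fin 8) k H)
    (hKP : IsKacPaljutkin k H g h z b)
    (lact ract : H ⊗[k] H →ₗ[k] H) (hmp : IsMatchedPairOfActions lact ract)
    (h1 : lact (z ⊗ₜ[k] g) = h) (h2 : lact (z ⊗ₜ[k] h) = g)
    (h3 : lact (z ⊗ₜ[k] (g * h)) = g * h)
    (h4 : ract (g ⊗ₜ[k] z) = h) (h5 : ract (h ⊗ₜ[k] z) = g)
    (h6 : ract ((g * h) ⊗ₜ[k] z) = g * h) :
    (lact (g ⊗ₜ[k] z) = z ∧ lact (h ⊗ₜ[k] z) = z ∧ lact ((g * h) ⊗ₜ[k] z) = z) ∧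
    (lact ((g * z) ⊗ₜ[k] z) = lact (z ⊗ₜ[k] z) ∧
      lact ((h * z) ⊗ₜ[k] z) = lact (z ⊗ₜ[k] z) ∧
      lact ((g * h * z) ⊗ₜ[k] z) = lact (z ⊗ₜ[k] z)) ∧
    (lact (z ⊗ₜ[k] (h * z)) = g * lact (z ⊗ₜ[k] z) ∧
      lact ((g * z) ⊗ₜ[k] (h * z)) = g * lact (z ⊗ₜ[k] z) ∧
      lact ((h * z) ⊗ₜ[k] (h * z)) = g * lact (z ⊗ₜ[k] z) ∧
      lact ((g * h * z) ⊗ₜ[k] (h * z)) = g * lact (z ⊗ₜ[k] z)) ∧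
    (lact (z ⊗ₜ[k] (g * z)) = h * lact (z ⊗ₜ[k] z) ∧
      lact ((g * z) ⊗ₜ[k] (g * z)) = h * lact (z ⊗ₜ[k] z) ∧
      lact ((h * z) ⊗ₜ[k] (g * z)) = h * lact (z ⊗ₜ[k] z) ∧
      lact ((g * h * z) ⊗ₜ[k] (g * z)) = h * lact (z ⊗ₜ[k] z)) ∧
    (lact (z ⊗ₜ[k] (g * h * z)) = g * h * lact (z ⊗ₜ[k] z) ∧
      lact ((g * z) ⊗ₜ[k] (g * h * z)) = g * h * lact (z ⊗ₜ[k] z) ∧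
      lact ((h * z) ⊗ₜ[k] (g * h * z)) = g * h * lact (z ⊗ₜ[k] z) ∧
      lact ((g * h * z) ⊗ₜ[k] (g * h * z)) = g * h * lact (z ⊗ₜ[k] z)) :=
  situation2_left_action_table_general g h z b hKP lact ract hmp h1 h2 h3 h4 h5 h6
end
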